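/- With f_m^4 = (Σ_j e_j^m)(Σ_j e_j)^{4−m}, one has E[f_4^4] = l·γ_b⁴ + 6l·γ_b²γ_ε² + l·γ_ε⁴ and E[f_3^4] = l²·γ_b⁴ + 3l(l+1)·γ_b²γ_ε² + l·γ_ε⁴. -/

import Mathlib

/-!
Every summand of both moments has the form
`E[(b + ε_j)³ (b + ε_k)] = E[(b + ε_j)³ b] + E[(b + ε_j)³ ε_k]`. Expanding binomially and
factorising by independence of `b` and `ε_j`, all terms containing a first moment vanish, so
`E[(b + ε_j)³ b] = γ_b⁴ + 3 γ_b² γ_ε²`, and symmetrically `E[(b + ε_j)³ ε_j] = γ_ε⁴ + 3 γ_b² γ_ε²`.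
For `k ≠ j`, `ε_k` is independent of `(b, ε_j)` and centred, so `E[(b + ε_j)³ ε_k] = 0`.
Summing over the diagonal `j = k`, respectively over all pairs, gives the two formulas.
-/

open MeasureTheory ProbabilityTheory Finset

section Moments

variable {Ω : Type*} {mΩ : MeasurableSpace Ω} {μ : Measure Ω}

theorem MeasureTheory.memLp_of_integrable_pow {X : Ω → ℝ} {p : ℕ} (hp : p ≠ 0)
    (hX : AEStronglyMeasurable X μ) (h : Integrable (fun ω => X ω ^ p) μ) : MemLp X p μ := by
  rw [← integrable_norm_rpow_iff hX (by simpa using hp) (by simp)]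
  simpa only [ENNReal.toReal_natCast, Real.rpow_natCast, norm_pow] using h.norm

theorem MeasureTheory.MemLp.integrable_pow_of_le [IsFiniteMeasure μ] {X : Ω → ℝ} {p k : ℕ}
    (hX : MemLp X p μ) (hk : k ≤ p) : Integrable (fun ω => X ω ^ k) μ := by
  have h := (hX.mono_exponent (by exact_mod_cast hk : (k : ENNReal) ≤ p)).integrable_norm_pow'
  exact (integrable_norm_iff (hX.1.pow k)).1 (by simpa only [Pi.pow_apply, norm_pow] using h)

theorem MeasureTheory.MemLp.integrable_pow_three_mul {f g : Ω → ℝ} (hf : MemLp f 4 μ)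
    (hg : MemLp g 4 μ) : Integrable (fun ω => f ω ^ 3 * g ω) μ := by
  have h := MemLp.prod' (s := univ) (f := ![f, f, f, g]) (p := fun _ => 4) (μ := μ)
    (by intro i _; fin_cases i <;> assumption)
  have h4 : (∑ _i : Fin 4, (4 : ENNReal)⁻¹)⁻¹ = 1 := by
    rw [sum_const, card_univ, Fintype.card_fin, nsmul_eq_mul, Nat.cast_ofNat,
      ENNReal.mul_inv_cancel (by norm_num) (by norm_num), inv_one]
  rw [h4, memLp_one_iff_integrable] at h
  convert h using 2 with ω
  simp only [Fin.prod_univ_four, Matrix.cons_val]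
  ring

theorem ProbabilityTheory.IndepFun.integral_add_pow_mul_pow [IsFiniteMeasure μ] {X Y : Ω → ℝ}
    (hXY : IndepFun X Y μ) {n m : ℕ} (hX : MemLp X (n + m : ℕ) μ) (hY : MemLp Y n μ) :
    ∫ ω, (X ω + Y ω) ^ n * X ω ^ m ∂μ =
      ∑ k ∈ range (n + 1), n.choose k * (∫ ω, X ω ^ (k + m) ∂μ) * ∫ ω, Y ω ^ (n - k) ∂μ := by
  have hpow : ∀ k ∈ range (n + 1),
      IndepFun (fun ω => X ω ^ (k + m)) (fun ω => Y ω ^ (n - k)) μ := fun k _ =>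
    hXY.comp (φ := (· ^ (k + m))) (ψ := (· ^ (n - k))) (by fun_prop) (by fun_prop)
  have hint : ∀ k ∈ range (n + 1),
      Integrable (fun ω => X ω ^ (k + m) * Y ω ^ (n - k)) μ := fun k hk =>
    (hpow k hk).integrable_mul (hX.integrable_pow_of_le (by grind))
      (hY.integrable_pow_of_le (Nat.sub_le n k))
  have hexp : ∀ ω, (X ω + Y ω) ^ n * X ω ^ m =
      ∑ k ∈ range (n + 1), n.choose k * (X ω ^ (k + m) * Y ω ^ (n - k)) := fun ω => by
    rw [add_pow, sum_mul]
    refine sum_congr rfl fun k _ => ?_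
    ring
  simp_rw [hexp]
  rw [integral_finsetSum _ fun k hk => (hint k hk).const_mul _]
  refine sum_congr rfl fun k hk => ?_
  rw [integral_const_mul, mul_assoc]
  exact congrArg _ ((hpow k hk).integral_mul_eq_mul_integral (hX.1.pow _) (hY.1.pow _))

theorem ProbabilityTheory.IndepFun.integral_add_pow_three_mul [IsProbabilityMeasure μ]
    {X Y : Ω → ℝ} (hXY : IndepFun X Y μ) (hX : MemLp X 4 μ) (hY : MemLp Y 3 μ)
    (hX0 : ∫ ω, X ω ∂μ = 0) (hY0 : ∫ ω, Y ω ∂μ = 0) :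
    ∫ ω, (X ω + Y ω) ^ 3 * X ω ∂μ =
      ∫ ω, X ω ^ 4 ∂μ + 3 * (∫ ω, X ω ^ 2 ∂μ) * ∫ ω, Y ω ^ 2 ∂μ := by
  have h := hXY.integral_add_pow_mul_pow (n := 3) (m := 1) hX hY
  simp only [pow_one] at h
  rw [h]
  simp [sum_range_succ, hX0, hY0, add_comm]

end Moments

section SharedComponent

variable {Ω ι : Type*} {mΩ : MeasurableSpace Ω} {μ : Measure Ω}
  {b : Ω → ℝ} {ε : ι → Ω → ℝ}

theorem integral_add_pow_three_mul_eq_zero_of_ne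
    (hindep : iIndepFun (fun i : Option ι => Option.elim i b ε) μ)
    (hb : Measurable b) (hε : ∀ j, Measurable (ε j)) {j k : ι} (hjk : j ≠ k)
    (hεk : ∫ ω, ε k ω ∂μ = 0) :
    ∫ ω, (b ω + ε j ω) ^ 3 * ε k ω ∂μ = 0 := by
  have hmeas : ∀ i, Measurable (Option.elim i b ε) := fun i => by
    cases i
    · exact hb
    · exact hε _
  have hpair : IndepFun (fun ω => (b ω, ε j ω)) (ε k) μ :=
    hindep.indepFun_prodMk hmeas none (some j) (some k) (by simp) (by simp [hjk])
  have hcube : IndepFun (fun ω => (b ω + ε j ω) ^ 3) (ε k) μ :=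
    hpair.comp (φ := fun p : ℝ × ℝ => (p.1 + p.2) ^ 3) (by fun_prop) measurable_id
  rw [← mul_zero (∫ ω, (b ω + ε j ω) ^ 3 ∂μ), ← hεk]
  exact hcube.integral_mul_eq_mul_integral (by fun_prop) (hε k).aestronglyMeasurable

theorem integral_add_pow_three_mul_add [IsProbabilityMeasure μ] [DecidableEq ι]
    (hindep : iIndepFun (fun i : Option ι => Option.elim i b ε) μ)
    (hb : Measurable b) (hε : ∀ j, Measurable (ε j))
    (hb4 : MemLp b 4 μ) (hε4 : ∀ j, MemLp (ε j) 4 μ)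
    (hb0 : ∫ ω, b ω ∂μ = 0) (hε0 : ∀ j, ∫ ω, ε j ω ∂μ = 0) (j k : ι) :
    ∫ ω, (b ω + ε j ω) ^ 3 * (b ω + ε k ω) ∂μ =
      ∫ ω, b ω ^ 4 ∂μ + 3 * (∫ ω, b ω ^ 2 ∂μ) * (∫ ω, ε j ω ^ 2 ∂μ) +
        if j = k then 3 * (∫ ω, b ω ^ 2 ∂μ) * (∫ ω, ε j ω ^ 2 ∂μ) + ∫ ω, ε j ω ^ 4 ∂μ
        else 0 := by
  have hbε : IndepFun b (ε j) μ := hindep.indepFun (show (none : Option ι) ≠ some j by simp)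
  have hsum : MemLp (fun ω => b ω + ε j ω) 4 μ := hb4.add (hε4 j)
  have h3 : ∀ {X : Ω → ℝ}, MemLp X 4 μ → MemLp X 3 μ := fun h => h.mono_exponent (by norm_num)
  simp_rw [mul_add]
  rw [integral_add (hsum.integrable_pow_three_mul hb4) (hsum.integrable_pow_three_mul (hε4 k)),
    hbε.integral_add_pow_three_mul hb4 (h3 (hε4 j)) hb0 (hε0 j)]
  split_ifs with hjk
  · subst hjk
    simp_rw [add_comm (b _) (ε j _)]
    rw [hbε.symm.integral_add_pow_three_mul (hε4 j) (h3 hb4) (hε0 j) hb0]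
    ring
  · rw [integral_add_pow_three_mul_eq_zero_of_ne hindep hb hε hjk (hε0 k), add_zero]

end SharedComponent

theorem fourth_moment_f44_f34_general
    {l : ℕ}
    {Ω : Type*} [MeasureSpace Ω] [IsProbabilityMeasure (ℙ : Measure Ω)]
    (b : Ω → ℝ) (ε : Fin l → Ω → ℝ)
    (hbmeas : Measurable b) (hεmeas : ∀ j, Measurable (ε j))
    (hindep : ProbabilityTheory.iIndepFun
      (fun i : Option (Fin l) => Option.elim i b ε) ℙ)
    (hεmean : ∀ j, ∫ ω, ε j ω = 0)
    (hεint4 : ∀ j, Integrable (fun ω => (ε j ω) ^ 4) ℙ)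
    (hbint4 : Integrable (fun ω => (b ω) ^ 4) ℙ)
    (hbmean : ∫ ω, b ω = 0)
    (γb2 γb4 γε2 γε4 : ℝ)
    (hb2 : ∫ ω, (b ω) ^ 2 = γb2) (hb4 : ∫ ω, (b ω) ^ 4 = γb4)
    (hε2 : ∀ j, ∫ ω, (ε j ω) ^ 2 = γε2) (hε4 : ∀ j, ∫ ω, (ε j ω) ^ 4 = γε4) :
    (∫ ω, ∑ j, (b ω + ε j ω) ^ 4
        = (l : ℝ) * γb4 + 6 * (l : ℝ) * γb2 * γε2 + (l : ℝ) * γε4) ∧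
    (∫ ω, (∑ j, (b ω + ε j ω) ^ 3) * (∑ j, (b ω + ε j ω))
        = (l : ℝ) ^ 2 * γb4 + 3 * (l : ℝ) * ((l : ℝ) + 1) * γb2 * γε2
          + (l : ℝ) * γε4) := by
  have hbL4 : MemLp b 4 ℙ :=
    memLp_of_integrable_pow four_ne_zero hbmeas.aestronglyMeasurable hbint4
  have hεL4 : ∀ j, MemLp (ε j) 4 ℙ := fun j =>
    memLp_of_integrable_pow four_ne_zero (hεmeas j).aestronglyMeasurable (hεint4 j)
  have hint : ∀ j k, Integrable (fun ω => (b ω + ε j ω) ^ 3 * (b ω + ε k ω)) ℙ := fun j k =>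
    (hbL4.add (hεL4 j)).integrable_pow_three_mul (hbL4.add (hεL4 k))
  have hterm : ∀ j k, ∫ ω, (b ω + ε j ω) ^ 3 * (b ω + ε k ω) =
      γb4 + 3 * γb2 * γε2 + if j = k then 3 * γb2 * γε2 + γε4 else 0 := fun j k => by
    rw [integral_add_pow_three_mul_add hindep hbmeas hεmeas hbL4 hεL4 hbmean hεmean,
      hb2, hb4, hε2, hε4]
  constructor
  · have hpow : ∀ ω j, (b ω + ε j ω) ^ 4 = (b ω + ε j ω) ^ 3 * (b ω + ε j ω) :=
      fun _ _ => pow_succ _ 3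
    simp_rw [hpow]
    rw [integral_finsetSum _ fun j _ => hint j j]
    simp only [hterm, ↓reduceIte, sum_const, card_univ, Fintype.card_fin, nsmul_eq_mul]
    ring
  · simp_rw [sum_mul_sum]
    rw [integral_finsetSum _ fun j _ => integrable_finsetSum _ fun k _ => hint j k]
    simp_rw [integral_finsetSum _ fun k _ => hint _ k, hterm]
    simp only [sum_add_distrib, sum_const, card_univ, Fintype.card_fin, nsmul_eq_mul, sum_ite_eq,
      mem_univ, ↓reduceIte]
    ring

/-- E[f_4^4] and E[f_3^4] identities. -/
theorem fourth_moment_f44_f34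
    {l : ℕ} (hl : 1 ≤ l)
    {Ω : Type*} [MeasureSpace Ω] [IsProbabilityMeasure (ℙ : Measure Ω)]
    (b : Ω → ℝ) (ε : Fin l → Ω → ℝ)
    (hbmeas : Measurable b) (hεmeas : ∀ j, Measurable (ε j))
    (hindep : ProbabilityTheory.iIndepFun
      (fun i : Option (Fin l) => Option.elim i b ε) ℙ)
    (hident : ∀ j j' : Fin l, Measure.map (ε j) ℙ = Measure.map (ε j') ℙ)
    (hεmean : ∀ j, ∫ ω, ε j ω = 0)
    (hεint4 : ∀ j, Integrable (fun ω => (ε j ω) ^ 4) ℙ)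
    (hbint4 : Integrable (fun ω => (b ω) ^ 4) ℙ)
    (hbmean : ∫ ω, b ω = 0)
    (γb2 γb4 γε2 γε4 : ℝ)
    (hb2 : ∫ ω, (b ω) ^ 2 = γb2) (hb4 : ∫ ω, (b ω) ^ 4 = γb4)
    (hε2 : ∀ j, ∫ ω, (ε j ω) ^ 2 = γε2) (hε4 : ∀ j, ∫ ω, (ε j ω) ^ 4 = γε4) :
    (∫ ω, ∑ j, (b ω + ε j ω) ^ 4
        = (l : ℝ) * γb4 + 6 * (l : ℝ) * γb2 * γε2 + (l : ℝ) * γε4) ∧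
    (∫ ω, (∑ j, (b ω + ε j ω) ^ 3) * (∑ j, (b ω + ε j ω))
        = (l : ℝ) ^ 2 * γb4 + 3 * (l : ℝ) * ((l : ℝ) + 1) * γb2 * γε2
          + (l : ℝ) * γε4) :=
  fourth_moment_f44_f34_general b ε hbmeas hεmeas hindep hεmean hεint4 hbint4 hbmean γb2 γb4 γε2 γε4
    hb2 hb4 hε2 hε4
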